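/- For every n ≥ 0, the number of walks of length n constrained to the first octant (all positions (x,y) satisfy x ≥ y ≥ 0) equals the number of walks of length n constrained to the first quadrant (all positions satisfy x ≥ 0 and y ≥ 0) that end on the x-axis. -/

import Mathlib

/-- A walk of length `n` with unit steps N, S, E, W. -/
def IsWalk {n : ℕ} (w : Fin n → ℤ × ℤ) : Prop :=
  ∀ l, w l = (0, 1) ∨ w l = (0, -1) ∨ w l = (1, 0) ∨ w l = (-1, 0)

/-- Position of the walk `w` after `a` steps. -/
def pos {n : ℕ} (w : Fin n → ℤ × ℤ) (a : ℕ) : ℤ × ℤ :=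
  ∑ l ∈ Finset.univ.filter (fun l : Fin n => (l : ℕ) < a), w l

/-!
In the rotated coordinates `(x + y, x - y)` the four steps become the diagonal steps `(±1, ±1)`.
Relate a point `q` of the quadrant, with rotated coordinates `(σ, δ)`, to a point `p` of the
octant, with rotated coordinates `(a, b)`, by the kernel `K(q, p)`: `|δ| ≤ b ≤ σ ≤ a` and
`σ ≡ b (mod 2)`. Both `∑ₛ K(q - s, p)` and `∑ₛ K(q, p + s)` vanish unless `σ + b` is odd, and
then each splits into a product of a `σ`-factor and a `δ`-factor; a finite case check shows that
the two products agree. So `K` intertwines the two step operators, and by induction on the length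
the number of quadrant walks ending at `q` equals the number of octant walks whose endpoint `p`
satisfies `K(q, p)`. For `q = (u, 0)` on the x-axis and `p = (x, y)`, `K(q, p)` says exactly that
`p` lies in the octant and `x - y = u`, so summing over `u` counts every octant walk once.
-/

open Finset

theorem Finset.card_eq_of_forall_card_fiber_eq {ι κ M : Type*} [DecidableEq M] {s : Finset ι}
    {t : Finset κ} {f : ι → M} {g : κ → M} (h : ∀ m, #{i ∈ s | f i = m} = #{k ∈ t | g k = m}) :
    #s = #t := by
  rw [card_eq_sum_card_fiberwise (t := s.image f ∪ t.image g)
      fun i hi => mem_union_left _ (mem_image_of_mem f hi),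
    card_eq_sum_card_fiberwise (t := s.image f ∪ t.image g)
      fun k hk => mem_union_right _ (mem_image_of_mem g hk)]
  exact sum_congr rfl fun m _ => h m

theorem ite_and_one_zero {M : Type*} [MulZeroOneClass M] (p q : Prop) [Decidable p] [Decidable q] :
    (if p ∧ q then 1 else 0 : M) = (if p then 1 else 0) * (if q then 1 else 0) := by
  rw [ite_zero_mul_ite_zero, mul_one]

namespace Walks

def step : Fin 4 → ℤ × ℤ := ![(0, 1), (0, -1), (1, 0), (-1, 0)]

theorem step_injective : Function.Injective step := by decide

theorem isWalk_iff {n : ℕ} {w : Fin n → ℤ × ℤ} : IsWalk w ↔ ∀ l, w l ∈ Set.range step := by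
  refine forall_congr' fun l => ?_
  simp only [step, Matrix.range_cons, Matrix.range_empty, Set.union_empty, Set.union_singleton,
    Set.union_insert, Set.mem_insert_iff, Set.mem_singleton_iff]
  tauto

theorem natCard_isWalk_and {n : ℕ} (Φ : (Fin n → ℤ × ℤ) → Prop) :
    Nat.card {w : Fin n → ℤ × ℤ // IsWalk w ∧ Φ w} =
      Nat.card {f : Fin n → Fin 4 // Φ (step ∘ f)} := by
  let ofCodes (f : {f : Fin n → Fin 4 // Φ (step ∘ f)}) : {w // IsWalk w ∧ Φ w} :=
    ⟨step ∘ f, isWalk_iff.2 fun l => ⟨f.1 l, rfl⟩, f.2⟩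
  refine (Nat.card_congr (Equiv.ofBijective ofCodes ⟨?_, ?_⟩)).symm
  · intro f g h
    exact Subtype.ext (step_injective.comp_left (congrArg Subtype.val h))
  · rintro ⟨w, hw, hΦ⟩
    choose f hf using isWalk_iff.1 hw
    obtain rfl : step ∘ f = w := funext hf
    exact ⟨⟨f, hΦ⟩, rfl⟩

theorem pos_eq_sum_ite {n : ℕ} (w : Fin n → ℤ × ℤ) (a : ℕ) :
    pos w a = ∑ l : Fin n, if (l : ℕ) < a then w l else 0 :=
  sum_filter _ _

theorem pos_zero {n : ℕ} (w : Fin n → ℤ × ℤ) : pos w 0 = 0 := by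
  simp [pos]

theorem pos_snoc_of_le {n a : ℕ} (w : Fin n → ℤ × ℤ) (z : ℤ × ℤ) (ha : a ≤ n) :
    pos (Fin.snoc w z : Fin (n + 1) → ℤ × ℤ) a = pos w a := by
  simp [pos_eq_sum_ite, Fin.sum_univ_castSucc, ha.not_gt]

theorem pos_snoc_self {n : ℕ} (w : Fin n → ℤ × ℤ) (z : ℤ × ℤ) :
    pos (Fin.snoc w z : Fin (n + 1) → ℤ × ℤ) (n + 1) = pos w n + z := by
  simp [pos_eq_sum_ite, Fin.sum_univ_castSucc]

variable (P : ℤ × ℤ → Prop) [DecidablePred P]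

def walksIn (n : ℕ) : Finset (Fin n → Fin 4) := {f | ∀ a ≤ n, P (pos (step ∘ f) a)}

def endpoint {n : ℕ} (f : Fin n → Fin 4) : ℤ × ℤ := pos (step ∘ f) n

variable {P}

theorem endpoint_snoc {n : ℕ} (f : Fin n → Fin 4) (s : Fin 4) :
    endpoint (Fin.snoc f s : Fin (n + 1) → Fin 4) = endpoint f + step s := by
  rw [endpoint, Fin.comp_snoc, pos_snoc_self, endpoint]

theorem snoc_mem_walksIn {n : ℕ} {f : Fin n → Fin 4} {s : Fin 4} :
    (Fin.snoc f s : Fin (n + 1) → Fin 4) ∈ walksIn P (n + 1) ↔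
      f ∈ walksIn P n ∧ P (endpoint f + step s) := by
  simp only [walksIn, mem_filter, mem_univ, true_and, Fin.comp_snoc]
  constructor
  · intro h
    refine ⟨fun a ha => ?_, ?_⟩
    · simpa [pos_snoc_of_le _ _ ha] using h a (by omega)
    · simpa [pos_snoc_self, endpoint] using h (n + 1) le_rfl
  · rintro ⟨h, hs⟩ a ha
    rcases Nat.lt_or_eq_of_le ha with ha | rfl
    · rw [pos_snoc_of_le _ _ (Nat.le_of_lt_succ ha)]
      exact h a (Nat.le_of_lt_succ ha)
    · rwa [pos_snoc_self]

theorem endpoint_mem_of_mem_walksIn {n : ℕ} {f : Fin n → Fin 4} (hf : f ∈ walksIn P n) :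
    P (endpoint f) :=
  (mem_filter.1 hf).2 n le_rfl

theorem walksIn_zero (h : P 0) : walksIn P 0 = univ := by
  ext f
  simp [walksIn, pos_zero, h]

theorem sum_walksIn_succ {M : Type*} [AddCommMonoid M] (n : ℕ) (φ : ℤ × ℤ → M) :
    ∑ f ∈ walksIn P (n + 1), φ (endpoint f) =
      ∑ f ∈ walksIn P n, ∑ s, if P (endpoint f + step s) then φ (endpoint f + step s) else 0 := by
  calc ∑ f ∈ walksIn P (n + 1), φ (endpoint f)
      = ∑ f, if f ∈ walksIn P (n + 1) then φ (endpoint f) else 0 := by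
        rw [sum_ite_mem, univ_inter]
    _ = ∑ s, ∑ f, if (Fin.snoc f s : Fin (n + 1) → Fin 4) ∈ walksIn P (n + 1)
          then φ (endpoint (Fin.snoc f s : Fin (n + 1) → Fin 4)) else 0 := by
        rw [← (Fin.snocEquiv fun _ => Fin 4).sum_comp, Fintype.sum_prod_type]
        rfl
    _ = ∑ f ∈ walksIn P n, ∑ s, if P (endpoint f + step s) then φ (endpoint f + step s) else 0 := by
        simp only [snoc_mem_walksIn, endpoint_snoc, ite_and, sum_comm (γ := Fin 4),
          sum_ite_mem, univ_inter]

theorem card_filter_walksIn_succ {R : ℤ × ℤ → Prop} [DecidablePred R] (hR : ∀ p, R p → P p)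
    (n : ℕ) :
    #{f ∈ walksIn P (n + 1) | R (endpoint f)} =
      ∑ f ∈ walksIn P n, ∑ s, if R (endpoint f + step s) then 1 else 0 := by
  rw [card_filter, sum_walksIn_succ n fun p => if R p then 1 else 0]
  refine sum_congr rfl fun f _ => sum_congr rfl fun s _ => ?_
  by_cases h : R (endpoint f + step s)
  · simp [h, hR _ h]
  · simp [h]

def octant (p : ℤ × ℤ) : Prop := p.2 ≤ p.1 ∧ 0 ≤ p.2

def quadrant (p : ℤ × ℤ) : Prop := 0 ≤ p.1 ∧ 0 ≤ p.2

instance : DecidablePred octant := fun _ => inferInstanceAs (Decidable (_ ∧ _))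

instance : DecidablePred quadrant := fun _ => inferInstanceAs (Decidable (_ ∧ _))

def rot (p : ℤ × ℤ) : ℤ × ℤ := (p.1 + p.2, p.1 - p.2)

def diagStep : Fin 4 → ℤ × ℤ := ![(1, -1), (-1, 1), (1, 1), (-1, -1)]

theorem rot_add (p p' : ℤ × ℤ) : rot (p + p') = rot p + rot p' :=
  Prod.ext (by simp only [rot, Prod.fst_add, Prod.snd_add]; ring)
    (by simp only [rot, Prod.fst_add, Prod.snd_add]; ring)

theorem rot_sub (p p' : ℤ × ℤ) : rot (p - p') = rot p - rot p' :=
  Prod.ext (by simp only [rot, Prod.fst_sub, Prod.snd_sub]; ring)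
    (by simp only [rot, Prod.fst_sub, Prod.snd_sub]; ring)

theorem rot_step (s : Fin 4) : rot (step s) = diagStep s := by
  fin_cases s <;> rfl

def rotKernel (Q P : ℤ × ℤ) : Prop := |Q.2| ≤ P.2 ∧ P.2 ≤ Q.1 ∧ Q.1 ≤ P.1 ∧ Even (Q.1 + P.2)

instance (Q : ℤ × ℤ) : DecidablePred (rotKernel Q) := fun _ => inferInstanceAs (Decidable (_ ∧ _))

theorem rotKernel_factor_identity {σ δ a b : ℤ} (hδσ : |δ| ≤ σ) (hσδ : Even (σ + δ)) (hb : 0 ≤ b)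
    (hba : b ≤ a) (hσb : Odd (σ + b)) :
    ((if b ≤ σ - 1 ∧ σ - 1 ≤ a then 1 else 0) + (if b ≤ σ + 1 ∧ σ + 1 ≤ a then 1 else 0)) *
      ((if |δ - 1| ≤ b then 1 else 0) + (if |δ + 1| ≤ b then 1 else 0)) =
    ((if σ ≤ a + 1 then 1 else 0) + (if σ ≤ a - 1 then 1 else 0)) *
      ((if |δ| ≤ b + 1 ∧ b + 1 ≤ σ then 1 else 0) +
        (if |δ| ≤ b - 1 ∧ b - 1 ≤ σ then 1 else 0) : ℕ) := by
  rw [Int.odd_iff] at hσb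
  rw [Int.even_iff] at hσδ
  rw [abs_le] at hδσ
  simp only [abs_le]
  split_ifs <;> omega

theorem rotKernel_sub_iff {σ δ a b ε η : ℤ} (hε : ε = 1 ∨ ε = -1) :
    rotKernel ((σ, δ) - (ε, η)) (a, b) ↔ Odd (σ + b) ∧ (b ≤ σ - ε ∧ σ - ε ≤ a) ∧ |δ - η| ≤ b := by
  simp only [rotKernel, Prod.mk_sub_mk, Int.even_iff, Int.odd_iff]
  omega

theorem rotKernel_add_iff {σ δ a b ε η : ℤ} (hη : η = 1 ∨ η = -1) :
    rotKernel (σ, δ) ((a, b) + (ε, η)) ↔ Odd (σ + b) ∧ σ ≤ a + ε ∧ (|δ| ≤ b + η ∧ b + η ≤ σ) := by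
  simp only [rotKernel, Prod.mk_add_mk, Int.even_iff, Int.odd_iff]
  omega

theorem sum_rotKernel_sub_diagStep {Q P : ℤ × ℤ} (hQ : |Q.2| ≤ Q.1) (hQ_even : Even (Q.1 + Q.2))
    (hP : 0 ≤ P.2) (hP_le : P.2 ≤ P.1) :
    ∑ s, (if rotKernel (Q - diagStep s) P then 1 else 0) =
      ∑ s, (if rotKernel Q (P + diagStep s) then 1 else 0) := by
  obtain ⟨σ, δ⟩ := Q
  obtain ⟨a, b⟩ := P
  have h_one : (1 : ℤ) = 1 ∨ (1 : ℤ) = -1 := Or.inl rfl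
  have h_neg_one : (-1 : ℤ) = 1 ∨ (-1 : ℤ) = -1 := Or.inr rfl
  simp only [Fin.sum_univ_four, diagStep, Matrix.cons_val_zero, Matrix.cons_val_one,
    Matrix.cons_val_two, Matrix.cons_val_three, Matrix.head_cons, Matrix.tail_cons,
    rotKernel_sub_iff h_one, rotKernel_sub_iff h_neg_one, rotKernel_add_iff h_one,
    rotKernel_add_iff h_neg_one, sub_neg_eq_add, ← sub_eq_add_neg]
  by_cases hσb : Odd (σ + b)
  · have h := rotKernel_factor_identity hQ hQ_even hP hP_le hσb
    simp only [hσb, true_and, ite_and_one_zero] at h ⊢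
    linarith
  · simp [hσb]

def kernel (q p : ℤ × ℤ) : Prop := rotKernel (rot q) (rot p)

instance (q : ℤ × ℤ) : DecidablePred (kernel q) :=
  fun _ => inferInstanceAs (Decidable (rotKernel _ _))

theorem quadrant_of_kernel {q p : ℤ × ℤ} (h : kernel q p) : quadrant q := by
  simp only [kernel, rotKernel, rot, abs_le] at h
  exact ⟨by omega, by omega⟩

theorem octant_of_kernel {q p : ℤ × ℤ} (h : kernel q p) : octant p := by
  simp only [kernel, rotKernel, rot, abs_le] at h
  exact ⟨by omega, by omega⟩

theorem kernel_zero_right_iff {q : ℤ × ℤ} : kernel q 0 ↔ q = 0 := by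
  simp only [kernel, rotKernel, rot, abs_le, Prod.ext_iff, Prod.fst_zero, Prod.snd_zero]
  constructor
  · omega
  · rintro ⟨h1, h2⟩
    simp [h1, h2]

theorem kernel_axis_iff {u : ℤ} {p : ℤ × ℤ} : kernel (u, 0) p ↔ octant p ∧ p.1 - p.2 = u := by
  simp only [kernel, rotKernel, rot, octant, abs_le, Int.even_iff]
  omega

theorem sum_kernel_sub_step {q p : ℤ × ℤ} (hq : quadrant q) (hp : octant p) :
    ∑ s, (if kernel (q - step s) p then 1 else 0) =
      ∑ s, (if kernel q (p + step s) then 1 else 0) := by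
  simp only [kernel, rot_sub, rot_add, rot_step]
  obtain ⟨u, v⟩ := q
  obtain ⟨x, y⟩ := p
  obtain ⟨hu, hv⟩ := hq
  obtain ⟨hxy, hy⟩ := hp
  refine sum_rotKernel_sub_diagStep ?_ ?_ ?_ ?_ <;> simp only [rot, abs_le, Int.even_iff] <;> omega

theorem card_quadrant_endpoint_eq (n : ℕ) (q : ℤ × ℤ) :
    #{f ∈ walksIn quadrant n | endpoint f = q} =
      #{f ∈ walksIn octant n | kernel q (endpoint f)} := by
  induction n generalizing q with
  | zero =>
    rw [walksIn_zero ⟨le_rfl, le_rfl⟩, walksIn_zero ⟨le_rfl, le_rfl⟩]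
    simp [endpoint, pos_zero, kernel_zero_right_iff, eq_comm]
  | succ n ih =>
    by_cases hq : quadrant q
    · calc #{f ∈ walksIn quadrant (n + 1) | endpoint f = q}
          = ∑ s, #{f ∈ walksIn quadrant n | endpoint f = q - step s} := by
            rw [card_filter_walksIn_succ (R := (· = q)) (fun _ hp => hp ▸ hq), sum_comm]
            simp only [card_filter, eq_sub_iff_add_eq]
        _ = ∑ s, #{f ∈ walksIn octant n | kernel (q - step s) (endpoint f)} := by
            simp only [ih]
        _ = ∑ f ∈ walksIn octant n, ∑ s, if kernel q (endpoint f + step s) then 1 else 0 := by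
            simp only [card_filter]
            rw [sum_comm]
            exact sum_congr rfl fun f hf => sum_kernel_sub_step hq (endpoint_mem_of_mem_walksIn hf)
        _ = #{f ∈ walksIn octant (n + 1) | kernel q (endpoint f)} :=
            (card_filter_walksIn_succ (fun _ => octant_of_kernel) n).symm
    · rw [filter_false_of_mem fun f hf (hfq : endpoint f = q) =>
          hq (hfq ▸ endpoint_mem_of_mem_walksIn hf),
        filter_false_of_mem fun f _ hf => hq (quadrant_of_kernel hf)]

end Walks

open Walks in
theorem stmt10 (n : ℕ) :
    Nat.card {w : Fin n → ℤ × ℤ //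
      IsWalk w ∧ (∀ a ≤ n, (pos w a).2 ≤ (pos w a).1 ∧ 0 ≤ (pos w a).2)} =
    Nat.card {w : Fin n → ℤ × ℤ //
      IsWalk w ∧ (∀ a ≤ n, 0 ≤ (pos w a).1 ∧ 0 ≤ (pos w a).2) ∧ (pos w n).2 = 0} := by
  have hO : Nat.card {w : Fin n → ℤ × ℤ // IsWalk w ∧ ∀ a ≤ n, octant (pos w a)} =
      #(walksIn octant n) := by
    rw [natCard_isWalk_and, Nat.card_eq_fintype_card, Fintype.card_subtype]
    rfl
  have hQ : Nat.card {w : Fin n → ℤ × ℤ //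
        IsWalk w ∧ (∀ a ≤ n, quadrant (pos w a)) ∧ (pos w n).2 = 0} =
      #{f ∈ walksIn quadrant n | (endpoint f).2 = 0} := by
    rw [natCard_isWalk_and, Nat.card_eq_fintype_card, Fintype.card_subtype, walksIn, filter_filter]
    rfl
  refine hO.trans (Eq.trans ?_ hQ.symm)
  refine card_eq_of_forall_card_fiber_eq (f := fun f => (endpoint f).1 - (endpoint f).2)
    (g := fun f => (endpoint f).1) fun u => ?_
  calc #{f ∈ walksIn octant n | (endpoint f).1 - (endpoint f).2 = u}
      = #{f ∈ walksIn octant n | kernel (u, 0) (endpoint f)} := by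
        refine congrArg card (filter_congr fun f hf => ?_)
        rw [kernel_axis_iff, and_iff_right (endpoint_mem_of_mem_walksIn hf)]
    _ = #{f ∈ walksIn quadrant n | endpoint f = (u, 0)} := (card_quadrant_endpoint_eq n (u, 0)).symm
    _ = #{f ∈ {f ∈ walksIn quadrant n | (endpoint f).2 = 0} | (endpoint f).1 = u} := by
        rw [filter_filter]
        refine congrArg card (filter_congr fun f _ => ?_)
        rw [Prod.ext_iff, and_comm]
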